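/- Let Λ(t) be the explicit real symmetric 4×4 matrix described in the context. There exists δ > 0 such that Λ(t) is invertible for all t ∈ (0, δ), and the matrix t⁵·Λ(t)⁻¹ converges entrywise, as t → 0⁺, to the matrix !![0, 0, 0, 0; 0, 4320, 0, −4320; 0, 0, 0, 0; 0, −4320, 0, 4320]. -/

import Mathlib

open Real Matrix

noncomputable def dd (t : ℝ) : ℝ := 1 - 2*t + t^2 - Real.exp t

noncomputable def NN (t : ℝ) : Matrix (Fin 4) (Fin 4) ℝ :=
  !![-2*Real.exp t + 2 - 2*t^2 + t^3, t*(t-2),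
     4*t*Real.exp t - 4*t + 3*t^2 - t^3 - t^2*Real.exp t - 2*Real.exp t + 2, t*(t-1-Real.exp t);
     t*(t-2), -Real.exp t + 1 - t + t^2, t*(t-1-Real.exp t), -Real.exp t + 1 - t;
     4*t*Real.exp t - 4*t + 3*t^2 - t^3 - t^2*Real.exp t - 2*Real.exp t + 2, t*(t-1-Real.exp t),
     Real.exp t * (-2*Real.exp t + 2 - 2*t^2 + t^3), t*(t-2)*Real.exp t;
     t*(t-1-Real.exp t), -Real.exp t + 1 - t, t*(t-2)*Real.exp t,
     Real.exp t * (-Real.exp t + 1 - t + t^2)]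

noncomputable def Lam (t : ℝ) : Matrix (Fin 4) (Fin 4) ℝ := (1 / dd t) • NN t

/-- The entrywise limit of `t⁵ Λ(t)⁻¹` as `t → 0⁺`. -/
noncomputable def Y0 : Matrix (Fin 4) (Fin 4) ℝ :=
  !![0, 0, 0, 0; 0, 4320, 0, -4320; 0, 0, 0, 0; 0, -4320, 0, 4320]

/-!
`Λ(t)⁻¹ = q(t)⁻¹ • A(t)` for exponential polynomials `A`, `q` (sums `∑ₖ e^{kt} pₖ(t)`,
`k = 0, …, 3`, with polynomial `pₖ`), because `N(t) A(t) = d(t) q(t) I` is an identity of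
polynomials in `t` and `eᵗ`. Replacing each `e^{kt}` by its Taylor polynomial, with remainder
`o(tⁿ)`, gives `A(t) = t⁴ L + o(t⁴)` for a constant matrix `L` and `q(t) = -t⁹/2160 + o(t⁹)`,
hence `t⁵ Λ(t)⁻¹ → -2160 L`.
-/

open Filter Topology Finset Nat

theorem tendsto_exp_sub_sum_div_pow (c : ℝ) (n : ℕ) :
    Tendsto (fun t : ℝ => (exp (c * t) - ∑ m ∈ range (n + 1), (c * t) ^ m / m !) / t ^ n)
      (𝓝[≠] 0) (𝓝 0) := by
  set K : ℝ := (n + 1).succ / ((n + 1)! * (n + 1 : ℕ))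
  have hsmall : ∀ᶠ t in 𝓝[≠] (0 : ℝ), |c * t| ≤ 1 := by
    have : Tendsto (fun t : ℝ => |c * t|) (𝓝 0) (𝓝 0) := by
      simpa using ((continuous_const.mul continuous_id).abs.tendsto (0 : ℝ))
    exact nhdsWithin_le_nhds (this.eventually (ge_mem_nhds one_pos))
  apply squeeze_zero_norm' (a := fun t => |c| ^ (n + 1) * K * |t|)
  · filter_upwards [hsmall, self_mem_nhdsWithin] with t ht (ht0 : t ≠ 0)
    rw [norm_div, norm_pow, Real.norm_eq_abs, Real.norm_eq_abs, div_le_iff₀ (by positivity)]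
    calc _ ≤ |c * t| ^ (n + 1) * K := Real.exp_bound ht n.succ_pos
      _ = _ := by rw [abs_mul, mul_pow]; ring
  · simpa using ((continuous_abs.tendsto (0 : ℝ)).const_mul (|c| ^ (n + 1) * K)).mono_left
      nhdsWithin_le_nhds

theorem tendsto_inv_pow_smul_sum_exp_smul {ι V : Type*} [TopologicalSpace V] [AddCommGroup V]
    [Module ℝ V] [IsTopologicalAddGroup V] [ContinuousSMul ℝ V] (s : Finset ι) (c : ι → ℝ)
    (p : ι → ℝ → V) (Q : ℝ → V) (n : ℕ) (hp : ∀ i ∈ s, ContinuousAt (p i) 0)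
    (hQ : ContinuousAt Q 0)
    (hTaylor : ∀ t, ∑ i ∈ s, (∑ m ∈ range (n + 1), (c i * t) ^ m / m !) • p i t = t ^ n • Q t) :
    Tendsto (fun t => (t ^ n)⁻¹ • ∑ i ∈ s, exp (c i * t) • p i t) (𝓝[≠] 0) (𝓝 (Q 0)) := by
  have hR : Tendsto (fun t => ∑ i ∈ s,
      ((exp (c i * t) - ∑ m ∈ range (n + 1), (c i * t) ^ m / m !) / t ^ n) • p i t)
      (𝓝[≠] 0) (𝓝 0) := by
    simpa using tendsto_finsetSum s fun i hi =>
      (tendsto_exp_sub_sum_div_pow (c i) n).smul ((hp i hi).tendsto.mono_left nhdsWithin_le_nhds)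
  have hlim := (hQ.tendsto.mono_left nhdsWithin_le_nhds).add hR
  rw [add_zero] at hlim
  refine hlim.congr' ?_
  filter_upwards [self_mem_nhdsWithin] with t (ht : t ≠ 0)
  have hsplit : ∀ i ∈ s,
      ((exp (c i * t) - ∑ m ∈ range (n + 1), (c i * t) ^ m / m !) / t ^ n) • p i t =
        (t ^ n)⁻¹ • (exp (c i * t) • p i t - (∑ m ∈ range (n + 1), (c i * t) ^ m / m !) • p i t) :=
    fun i _ => by rw [div_eq_inv_mul, mul_smul, sub_smul]
  rw [sum_congr rfl hsplit, ← smul_sum, sum_sub_distrib, hTaylor, smul_sub, smul_smul,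
    inv_mul_cancel₀ (pow_ne_zero n ht), one_smul, add_sub_cancel]

noncomputable def invNumCoeff : Fin 4 → ℝ → Matrix (Fin 4) (Fin 4) ℝ :=
  ![fun t => !![0, 0, 2, 2*t;
      0, 0, 2*t, 4 - 4*t + 2*t^2;
      2, 2*t, -2 - 4*t - t^2, -2*t^2 - t^3;
      2*t, 4 - 4*t + 2*t^2, -2*t^2 - t^3, -4 + 4*t - 2*t^2 - t^4],
    fun t => !![-2 - 4*t - t^2, -2*t^2 - t^3, -4 + 4*t + t^2 + t^3, -4*t - 2*t^3;
      -2*t^2 - t^3, -4 + 4*t - 2*t^2 - t^4, -4*t - 2*t^3, -8 + 4*t - 10*t^2 + 4*t^3;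
      -4 + 4*t + t^2 + t^3, -4*t - 2*t^3, 4 + 4*t - t^2 + t^3, 2*t^2 - t^3;
      -4*t - 2*t^3, -8 + 4*t - 10*t^2 + 4*t^3, 2*t^2 - t^3, 8 - 4*t + 10*t^2 - 4*t^3 + t^4],
    fun t => !![4 + 4*t - t^2 + t^3, 2*t^2 - t^3, 2 - 4*t + t^2, 2*t;
      2*t^2 - t^3, 8 - 4*t + 10*t^2 - 4*t^3 + t^4, 2*t, 4;
      2 - 4*t + t^2, 2*t, -2, 0;
      2*t, 4, 0, -4],
    fun _ => !![-2, 0, 0, 0; 0, -4, 0, 0; 0, 0, 0, 0; 0, 0, 0, 0]]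

noncomputable def invDenCoeff : Fin 4 → ℝ → ℝ :=
  ![fun _ => 4, fun t => -12 - 12*t^2 - 4*t^3 - t^4, fun t => 12 + 12*t^2 - 4*t^3 + t^4,
    fun _ => -4]

noncomputable def invNum (t : ℝ) : Matrix (Fin 4) (Fin 4) ℝ :=
  ∑ k : Fin 4, exp ((k : ℕ) * t) • invNumCoeff k t

noncomputable def invDen (t : ℝ) : ℝ := ∑ k : Fin 4, exp ((k : ℕ) * t) * invDenCoeff k t

/- Only the constant terms of `invNumQuot` and `invDenQuot` are Taylor coefficients of
`t⁻⁴ invNum t` and `t⁻⁹ invDen t`; the others come from truncating each `e^{kt}` separately. -/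
noncomputable def invNumQuot (t : ℝ) : Matrix (Fin 4) (Fin 4) ℝ :=
  !![3*t + 5/8*t^2 + 2/3*t^3, -1/6*t - 1/4*t^2 - 17/24*t^3,
      -1/2*t + 7/8*t^2 + 1/24*t^3, 1/6*t - 1/3*t^2 - 1/12*t^3;
    -1/6*t - 1/4*t^2 - 17/24*t^3, -2 + 7/2*t + 11/4*t^2 - 3/2*t^3 + 5/8*t^4,
      1/6*t - 1/3*t^2 - 1/12*t^3, 2 + 1/2*t + 1/4*t^2 + 1/6*t^3;
    -1/2*t + 7/8*t^2 + 1/24*t^3, 1/6*t - 1/3*t^2 - 1/12*t^3,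
      1/2*t + 1/8*t^2 + 1/24*t^3, -1/6*t - 1/12*t^2 - 1/24*t^3;
    1/6*t - 1/3*t^2 - 1/12*t^3, 2 + 1/2*t + 1/4*t^2 + 1/6*t^3,
      -1/6*t - 1/12*t^2 - 1/24*t^3, -2 + 1/2*t + 1/4*t^2 + 1/24*t^4]

noncomputable def invDenQuot (t : ℝ) : ℝ :=
  -1/2160 + 41/672*t + 251/15120*t^2 + 3/4480*t^3 + 73/51840*t^4

lemma sum_fin_four_exp_nat_mul_smul {M : Type*} [AddCommMonoid M] [Module ℝ M] (f : Fin 4 → M)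
    (t : ℝ) : ∑ k : Fin 4, exp ((k : ℕ) * t) • f k =
      f 0 + exp t • f 1 + exp t ^ 2 • f 2 + exp t ^ 3 • f 3 := by
  simp [Fin.sum_univ_four, ← Real.exp_nat_mul, add_assoc]

lemma NN_mul_invNum (t : ℝ) :
    NN t * invNum t = (dd t * invDen t) • (1 : Matrix (Fin 4) (Fin 4) ℝ) := by
  have hD : invDen t = invDenCoeff 0 t + exp t * invDenCoeff 1 t + exp t ^ 2 * invDenCoeff 2 t
      + exp t ^ 3 * invDenCoeff 3 t := sum_fin_four_exp_nat_mul_smul _ t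
  rw [invNum, sum_fin_four_exp_nat_mul_smul, hD]
  ext i j
  fin_cases i <;> fin_cases j <;>
  · simp only [NN, dd, invNumCoeff, invDenCoeff, Matrix.mul_apply, Fin.sum_univ_four,
      Matrix.add_apply, Matrix.smul_apply, Matrix.one_apply, Matrix.of_apply, Matrix.cons_val',
      Matrix.cons_val, Matrix.cons_val_fin_one, smul_eq_mul, Fin.isValue, Fin.zero_eta, Fin.mk_one,
      Fin.reduceFinMk, Matrix.cons_val_zero, Matrix.cons_val_one, Fin.reduceEq, if_true, if_false]
    ring

lemma continuous_invNumCoeff (k : Fin 4) : Continuous (invNumCoeff k) := by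
  fin_cases k <;>
  · simp only [invNumCoeff, Fin.isValue, Fin.zero_eta, Fin.mk_one, Fin.reduceFinMk,
      Matrix.cons_val_zero, Matrix.cons_val_one, Matrix.cons_val]
    fun_prop

lemma continuous_invDenCoeff (k : Fin 4) : Continuous (invDenCoeff k) := by
  fin_cases k <;>
  · simp only [invDenCoeff, Fin.isValue, Fin.zero_eta, Fin.mk_one, Fin.reduceFinMk,
      Matrix.cons_val_zero, Matrix.cons_val_one, Matrix.cons_val]
    fun_prop

lemma sum_taylor_smul_invNumCoeff (t : ℝ) :
    ∑ k : Fin 4, (∑ m ∈ range 5, ((k : ℕ) * t) ^ m / m !) • invNumCoeff k t =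
      t ^ 4 • invNumQuot t := by
  ext i j
  fin_cases i <;> fin_cases j <;>
  · simp only [invNumCoeff, invNumQuot, Fin.sum_univ_four, sum_range_succ, sum_range_zero,
      Nat.factorial, Matrix.add_apply, Matrix.smul_apply, Matrix.of_apply, Matrix.cons_val',
      Matrix.cons_val, Matrix.cons_val_fin_one, smul_eq_mul, Fin.isValue, Fin.zero_eta, Fin.mk_one,
      Fin.reduceFinMk, Matrix.cons_val_zero, Matrix.cons_val_one, Fin.coe_ofNat_eq_mod,
      Nat.reduceMod, Nat.cast_ofNat, Nat.cast_zero, Nat.cast_one]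
    ring

lemma sum_taylor_mul_invDenCoeff (t : ℝ) :
    ∑ k : Fin 4, (∑ m ∈ range 10, ((k : ℕ) * t) ^ m / m !) * invDenCoeff k t =
      t ^ 9 * invDenQuot t := by
  simp only [invDenCoeff, invDenQuot, Fin.sum_univ_four, sum_range_succ, sum_range_zero,
    Nat.factorial, Matrix.cons_val, Fin.isValue, Matrix.cons_val_zero, Matrix.cons_val_one,
    Fin.coe_ofNat_eq_mod, Nat.reduceMod, Nat.cast_ofNat, Nat.cast_zero, Nat.cast_one]
  ring

lemma tendsto_inv_pow_smul_invNum :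
    Tendsto (fun t => (t ^ 4)⁻¹ • invNum t) (𝓝[≠] 0)
      (𝓝 !![0, 0, 0, 0; 0, -2, 0, 2; 0, 0, 0, 0; 0, 2, 0, -2]) := by
  unfold invNum
  convert tendsto_inv_pow_smul_sum_exp_smul univ (fun k : Fin 4 => ((k : ℕ) : ℝ)) invNumCoeff
    invNumQuot 4 (fun k _ => (continuous_invNumCoeff k).continuousAt)
    (by unfold invNumQuot; fun_prop) sum_taylor_smul_invNumCoeff using 2
  ext i j
  fin_cases i <;> fin_cases j <;> norm_num [invNumQuot]

lemma tendsto_inv_pow_mul_invDen :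
    Tendsto (fun t => (t ^ 9)⁻¹ * invDen t) (𝓝[≠] 0) (𝓝 (-1 / 2160)) := by
  unfold invDen
  convert tendsto_inv_pow_smul_sum_exp_smul univ (fun k : Fin 4 => ((k : ℕ) : ℝ)) invDenCoeff
    invDenQuot 9 (fun k _ => (continuous_invDenCoeff k).continuousAt)
    (by unfold invDenQuot; fun_prop) sum_taylor_mul_invDenCoeff using 2 <;>
    norm_num [invDenQuot]

lemma dd_neg {t : ℝ} (ht : 0 < t) : dd t < 0 := by
  have h := Real.sum_le_exp_of_nonneg ht.le 4
  simp only [sum_range_succ, sum_range_zero, Nat.factorial] at h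
  rw [dd]
  nlinarith [pow_pos ht 3]

lemma eventually_invDen_ne_zero : ∀ᶠ t in 𝓝[>] 0, invDen t ≠ 0 := by
  filter_upwards [nhdsGT_le_nhdsNE 0
    (tendsto_inv_pow_mul_invDen.eventually_ne (show (-1 / 2160 : ℝ) ≠ 0 by norm_num))] with t ht
  exact right_ne_zero_of_mul ht

lemma Lam_mul_smul_invNum {t : ℝ} (hd : dd t ≠ 0) (hq : invDen t ≠ 0) :
    Lam t * ((invDen t)⁻¹ • invNum t) = 1 := by
  rw [Lam, Matrix.smul_mul, Matrix.mul_smul, NN_mul_invNum, smul_smul, smul_smul,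
    show 1 / dd t * (invDen t)⁻¹ * (dd t * invDen t) = 1 by field_simp, one_smul]

lemma isUnit_Lam {t : ℝ} (hd : dd t ≠ 0) (hq : invDen t ≠ 0) : IsUnit (Lam t) :=
  (Matrix.isUnit_iff_isUnit_det _).2
    (Matrix.isUnit_det_of_right_inverse (Lam_mul_smul_invNum hd hq))

lemma Lam_inv_eq {t : ℝ} (hd : dd t ≠ 0) (hq : invDen t ≠ 0) :
    (Lam t)⁻¹ = (invDen t)⁻¹ • invNum t :=
  Matrix.inv_eq_right_inv (Lam_mul_smul_invNum hd hq)

lemma tendsto_pow_smul_Lam_inv : Tendsto (fun t => t ^ 5 • (Lam t)⁻¹) (𝓝[>] 0) (𝓝 Y0) := by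
  have hlim := ((tendsto_inv_pow_mul_invDen.inv₀ (by norm_num)).smul
    tendsto_inv_pow_smul_invNum).mono_left (nhdsGT_le_nhdsNE 0)
  have hY : (-1 / 2160 : ℝ)⁻¹ • !![0, 0, 0, 0; 0, -2, 0, 2; 0, 0, 0, 0; 0, 2, 0, -2] = Y0 := by
    ext i j
    fin_cases i <;> fin_cases j <;> norm_num [Y0]
  rw [hY] at hlim
  refine hlim.congr' ?_
  filter_upwards [eventually_invDen_ne_zero, self_mem_nhdsWithin] with t hq (ht : 0 < t)
  rw [Lam_inv_eq (dd_neg ht).ne hq, smul_smul, smul_smul]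
  congr 1
  field_simp

theorem t5_Lam_inv_tendsto :
    ∃ δ > (0:ℝ), (∀ t ∈ Set.Ioo (0:ℝ) δ, IsUnit (Lam t)) ∧
      ∀ i j : Fin 4,
        Filter.Tendsto (fun t : ℝ => t^5 * (Lam t)⁻¹ i j)
          (nhdsWithin 0 (Set.Ioi 0)) (nhds (Y0 i j)) := by
  obtain ⟨δ, hδ, hsub⟩ := mem_nhdsGT_iff_exists_Ioo_subset.1 eventually_invDen_ne_zero
  refine ⟨δ, hδ, fun t ht => isUnit_Lam (dd_neg ht.1).ne (hsub ht), fun i j => ?_⟩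
  simpa using tendsto_pi_nhds.1 (tendsto_pi_nhds.1 tendsto_pow_smul_Lam_inv i) j
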